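/- Suppose ‖H‖₂ > 0, each map Ψ_{t_k} is differentiable on B_R with Jacobian (Fréchet derivative) JΨ_{t_k}(v) satisfying det(JΨ_{t_k}(v)) ≠ 0 for all v ∈ B_R, k ∈ ℕ. For k ∈ ℕ let S_J(u,k) := {v ∈ B_R : det(JΨ_{t_k}(v)) = det(JΨ_{t_k}(u))}. Suppose there are anti-leaf sets Ũ(u,k) ⊆ S_J(u,k) such that {‖Ψ_{t_k}(v) − Ψ_{t_k}(u)‖₂ : v ∈ Ũ(u,k)} = [0, d̃^{(2)}_max(u,k)], and for every v ∈ Ũ(u,k), ∑_{i=0}^{k} ‖Ψ_{t_i}(v) − Ψ_{t_i}(u)‖₂² ≤ C̃^{(2)}(u,k)·‖Ψ_{t_k}(v) − Ψ_{t_k}(u)‖₂²; suppose further there is a strictly increasing sequence i₁ < i₂ < … and constants C̃^{(2)}(u) < ∞, d̃^{(2)}_max(u) > 0 with C̃^{(2)}(u,i_j) ≤ C̃^{(2)}(u) and d̃^{(2)}_max(u,i_j) ≥ d̃^{(2)}_max(u) for all j. Suppose q is continuous at u, q(u) > 0, and q(v) > 0 for every v ∈ ∪_k Ũ(u,k). Define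 the filter likelihood ratio L_k(v) := (q(v)/q(u))·(det(JΨ_{t_k}(u))/det(JΨ_{t_k}(v)))·∏_{i=0}^{k} exp(−(‖H Ψ_{t_i}(v) − Y_i‖₂² − ‖H Ψ_{t_i}(u) − Y_i‖₂²)/(2ε²)). Then there exists ε₀ > 0 such that for every ε ∈ (0, ε₀] and every j ≥ 1, E[diam₂({Ψ_{t_{i_j}}(v) : v ∈ B_R, L_{i_j}(v) ≥ 1/e})] ≥ ε/(2·‖H‖₂·√(C̃^{(2)}(u))). -/

import Mathlib

open MeasureTheory ProbabilityTheory Set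
open scoped ENNReal

noncomputable section

/-- The determinant of the Jacobian (Fréchet derivative) of `Ψ_{t}` at `v`. -/
def jacDet {d : ℕ}
    (Ψ : ℝ → EuclideanSpace ℝ (Fin d) → EuclideanSpace ℝ (Fin d))
    (t : ℝ) (v : EuclideanSpace ℝ (Fin d)) : ℝ :=
  LinearMap.det (fderiv ℝ (Ψ t) v).toLinearMap

/-- The likelihood ratio of the filtering density at `Ψ_{t_k}(v)` against the
one at `Ψ_{t_k}(u)`, after observations `Y_i = H Ψ_{t_i}(u) + Z_i(ω)`,
`0 ≤ i ≤ k`, for Gaussian observation noise with covariance `ε²` times the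
identity. -/
def filterRatio {d dO : ℕ} {Ω : Type*}
    (Ψ : ℝ → EuclideanSpace ℝ (Fin d) → EuclideanSpace ℝ (Fin d))
    (H : EuclideanSpace ℝ (Fin d) →L[ℝ] EuclideanSpace ℝ (Fin dO))
    (q : EuclideanSpace ℝ (Fin d) → ℝ) (h ε : ℝ)
    (u : EuclideanSpace ℝ (Fin d)) (Z : ℕ → Ω → EuclideanSpace ℝ (Fin dO))
    (k : ℕ) (v : EuclideanSpace ℝ (Fin d)) (ω : Ω) : ℝ :=
  (q v / q u) * (jacDet Ψ (k * h) u / jacDet Ψ (k * h) v) *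
    ∏ i ∈ Finset.range (k + 1),
      Real.exp (-(‖H (Ψ (i * h) v) - (H (Ψ (i * h) u) + Z i ω)‖ ^ 2 -
        ‖H (Ψ (i * h) u) - (H (Ψ (i * h) u) + Z i ω)‖ ^ 2) / (2 * ε ^ 2))

open scoped NNReal RealInnerProductSpace
open Finset (range)

/-! Choose `v` in the anti-leaf set `Ũ(u, k)` with `‖Ψ_{t_k} v - Ψ_{t_k} u‖ = ε / (‖H‖ √C̃)`.
Its observation increments `H (Ψ_{t_i} v - Ψ_{t_i} u)` have total energy at most `ε²`, it is
`ε / ‖H‖`-close to `u`, so by continuity the prior ratio `q v / q u` is at least `e^{-1/2}`, and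
its Jacobian factor is `1`. Hence `L_k(v) ≥ e^{-1}` whenever the noise pairs nonnegatively with
the increments, which by the symmetry of centred Gaussian noise has probability at least `1/2`.
As `L_k(u) = 1`, on that event the high-likelihood set has diameter at least
`ε / (‖H‖ √C̃)`. -/

section SymmetricNoise

variable {Ω : Type*} [MeasurableSpace Ω] {μ : Measure Ω}

lemma identDistrib_neg_of_map_eq_gaussianReal {X : Ω → ℝ} (hX : Measurable X) {v : ℝ≥0}
    (hlaw : μ.map X = gaussianReal 0 v) : IdentDistrib X (fun ω ↦ -X ω) μ μ where
  aemeasurable_fst := hX.aemeasurable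
  aemeasurable_snd := hX.neg.aemeasurable
  map_eq := by
    rw [show (fun ω ↦ -X ω) = Neg.neg ∘ X from rfl, ← Measure.map_map measurable_neg hX, hlaw,
      gaussianReal_map_neg, neg_zero]

lemma ProbabilityTheory.iIndepFun.identDistrib_neg {ι : Type*} [Countable ι] {X : ι → Ω → ℝ}
    (hind : iIndepFun X μ) (hsymm : ∀ i, IdentDistrib (X i) (fun ω ↦ -X i ω) μ μ) :
    IdentDistrib (fun ω i ↦ X i ω) (fun ω i ↦ -X i ω) μ μ :=
  IdentDistrib.pi hsymm hind (hind.comp (fun _ ↦ Neg.neg) fun _ ↦ measurable_neg)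

lemma half_le_measure_nonneg_of_identDistrib_neg [IsProbabilityMeasure μ] {W : Ω → ℝ}
    (hW : IdentDistrib W (fun ω ↦ -W ω) μ μ) : 1 / 2 ≤ μ {ω | 0 ≤ W ω} := by
  have hreflect : μ {ω | W ω ≤ 0} = μ {ω | 0 ≤ W ω} := by
    simpa [Set.preimage, neg_nonneg] using (hW.measure_mem_eq (measurableSet_Ici (a := 0))).symm
  have hcover : 1 ≤ μ {ω | 0 ≤ W ω} * 2 := by
    calc (1 : ℝ≥0∞) = μ ({ω | 0 ≤ W ω} ∪ {ω | W ω ≤ 0}) := by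
          rw [← measure_univ (μ := μ)]; congr 1; ext ω; simp [le_total]
      _ ≤ μ {ω | 0 ≤ W ω} + μ {ω | W ω ≤ 0} := measure_union_le _ _
      _ = μ {ω | 0 ≤ W ω} * 2 := by rw [hreflect, mul_two]
  exact ENNReal.div_le_of_le_mul hcover

/-- The pairing is an odd measurable function of the noise coordinates, whose joint law is
invariant under negation. -/
lemma half_le_measure_sum_inner_nonneg [IsProbabilityMeasure μ] {ι : Type*} [Countable ι] {n : ℕ}
    {Z : ι → Ω → EuclideanSpace ℝ (Fin n)}
    (hind : iIndepFun (fun p : ι × Fin n ↦ fun ω ↦ Z p.1 ω p.2) μ)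
    (hsymm : ∀ i j, IdentDistrib (fun ω ↦ Z i ω j) (fun ω ↦ -Z i ω j) μ μ)
    (a : ι → EuclideanSpace ℝ (Fin n)) (s : Finset ι) :
    1 / 2 ≤ μ {ω | 0 ≤ ∑ i ∈ s, ⟪a i, Z i ω⟫} := by
  let Φ : (ι × Fin n → ℝ) → ℝ := fun x ↦ ∑ i ∈ s, ∑ j, a i j * x (i, j)
  have hΦ : Measurable Φ := by fun_prop
  have hodd := (hind.identDistrib_neg fun p ↦ hsymm p.1 p.2).comp hΦ
  have hpair : ∀ ω, ∑ i ∈ s, ⟪a i, Z i ω⟫ = Φ (fun p ↦ Z p.1 ω p.2) := fun ω ↦ by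
    simp [Φ, PiLp.inner_apply, mul_comm]
  simp only [hpair]
  refine half_le_measure_nonneg_of_identDistrib_neg ?_
  simpa [Function.comp_def, Φ] using hodd

lemma ofReal_mul_measure_le_lintegral_ofReal {s : Set Ω} (hs : MeasurableSet s) {c : ℝ}
    {F : Ω → ℝ} (hF : ∀ ω ∈ s, c ≤ F ω) :
    ENNReal.ofReal c * μ s ≤ ∫⁻ ω, ENNReal.ofReal (F ω) ∂μ :=
  calc ENNReal.ofReal c * μ s = ∫⁻ _ in s, ENNReal.ofReal c ∂μ := (setLIntegral_const s _).symm
    _ ≤ ∫⁻ ω in s, ENNReal.ofReal (F ω) ∂μ :=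
        setLIntegral_mono' hs fun ω hω ↦ ENNReal.ofReal_le_ofReal (hF ω hω)
    _ ≤ ∫⁻ ω, ENNReal.ofReal (F ω) ∂μ := setLIntegral_le_lintegral _ _

end SymmetricNoise

lemma ContinuousLinearMap.sum_norm_apply_sq_le {E F ι : Type*} [SeminormedAddCommGroup E]
    [SeminormedAddCommGroup F] [NormedSpace ℝ E] [NormedSpace ℝ F] (T : E →L[ℝ] F)
    (s : Finset ι) (x : ι → E) : ∑ i ∈ s, ‖T (x i)‖ ^ 2 ≤ ‖T‖ ^ 2 * ∑ i ∈ s, ‖x i‖ ^ 2 := by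
  rw [Finset.mul_sum]
  gcongr with i
  rw [← mul_pow]
  gcongr
  exact T.le_opNorm _

def highLikelihoodSet {d dO : ℕ} {Ω : Type*}
    (Ψ : ℝ → EuclideanSpace ℝ (Fin d) → EuclideanSpace ℝ (Fin d))
    (H : EuclideanSpace ℝ (Fin d) →L[ℝ] EuclideanSpace ℝ (Fin dO))
    (q : EuclideanSpace ℝ (Fin d) → ℝ) (h R ε : ℝ)
    (u : EuclideanSpace ℝ (Fin d)) (Z : ℕ → Ω → EuclideanSpace ℝ (Fin dO)) (k : ℕ) (ω : Ω) :
    Set (EuclideanSpace ℝ (Fin d)) :=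
  {v | ‖v‖ ≤ R ∧ Real.exp (-1) ≤ filterRatio Ψ H q h ε u Z k v ω}

section FilterRatio

variable {d dO : ℕ} {Ω : Type*} {Ψ : ℝ → EuclideanSpace ℝ (Fin d) → EuclideanSpace ℝ (Fin d)}
  {H : EuclideanSpace ℝ (Fin d) →L[ℝ] EuclideanSpace ℝ (Fin dO)}
  {q : EuclideanSpace ℝ (Fin d) → ℝ} {h R ε : ℝ} {u v : EuclideanSpace ℝ (Fin d)}
  {Z : ℕ → Ω → EuclideanSpace ℝ (Fin dO)} {k : ℕ} {ω : Ω}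

lemma norm_sub_sq_le_sum_norm_sub_sq (hv : Ψ 0 v = v) (hu : Ψ 0 u = u) :
    ‖v - u‖ ^ 2 ≤ ∑ i ∈ range (k + 1), ‖Ψ (i * h) v - Ψ (i * h) u‖ ^ 2 := by
  have h0 := Finset.single_le_sum (f := fun i : ℕ ↦ ‖Ψ (i * h) v - Ψ (i * h) u‖ ^ 2)
    (fun i _ ↦ sq_nonneg _) (Finset.mem_range.mpr k.succ_pos)
  simpa [hv, hu] using h0

lemma exists_antiLeaf_point {U : Set (EuclideanSpace ℝ (Fin d))} {dmax Ck C r : ℝ}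
    (hU : U ⊆ {v | ‖v‖ ≤ R ∧ jacDet Ψ (k * h) v = jacDet Ψ (k * h) u})
    (hU_range : (fun v ↦ ‖Ψ (k * h) v - Ψ (k * h) u‖) '' U = Icc 0 dmax)
    (hCk : ∀ v ∈ U, ∑ i ∈ range (k + 1), ‖Ψ (i * h) v - Ψ (i * h) u‖ ^ 2 ≤
      Ck * ‖Ψ (k * h) v - Ψ (k * h) u‖ ^ 2)
    (hC : Ck ≤ C) (hr₀ : 0 ≤ r) (hr : r ≤ dmax) :
    ∃ v, ‖v‖ ≤ R ∧ jacDet Ψ (k * h) v = jacDet Ψ (k * h) u ∧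
      ‖Ψ (k * h) v - Ψ (k * h) u‖ = r ∧
      ∑ i ∈ range (k + 1), ‖Ψ (i * h) v - Ψ (i * h) u‖ ^ 2 ≤ C * r ^ 2 := by
  have hr_mem : r ∈ (fun v ↦ ‖Ψ (k * h) v - Ψ (k * h) u‖) '' U := hU_range ▸ ⟨hr₀, hr⟩
  obtain ⟨v, hvU, hvr : ‖Ψ (k * h) v - Ψ (k * h) u‖ = r⟩ := hr_mem
  refine ⟨v, (hU hvU).1, (hU hvU).2, hvr, (hCk v hvU).trans ?_⟩
  rw [hvr]
  gcongr

lemma filterRatio_self (hqu : q u ≠ 0) (hJ : jacDet Ψ (k * h) u ≠ 0) :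
    filterRatio Ψ H q h ε u Z k u ω = 1 := by
  simp [filterRatio, hqu, hJ]

lemma filterRatio_eq_of_jacDet_eq (hJ : jacDet Ψ (k * h) u ≠ 0)
    (hJv : jacDet Ψ (k * h) v = jacDet Ψ (k * h) u) :
    filterRatio Ψ H q h ε u Z k v ω = q v / q u * Real.exp
      ((2 * ∑ i ∈ range (k + 1), ⟪H (Ψ (i * h) v - Ψ (i * h) u), Z i ω⟫ -
        ∑ i ∈ range (k + 1), ‖H (Ψ (i * h) v - Ψ (i * h) u)‖ ^ 2) / (2 * ε ^ 2)) := by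
  rw [filterRatio, hJv, div_self hJ, mul_one, Finset.mul_sum, ← Finset.sum_sub_distrib,
    Finset.sum_div, Real.exp_sum]
  congr 1
  refine Finset.prod_congr rfl fun i _ ↦ ?_
  rw [map_sub, sub_add_eq_sub_sub, sub_add_cancel_left, norm_neg, norm_sub_sq_real]
  ring_nf

lemma exp_neg_one_le_filterRatio (hε : 0 < ε) (hJ : jacDet Ψ (k * h) u ≠ 0)
    (hJv : jacDet Ψ (k * h) v = jacDet Ψ (k * h) u) (hqu : 0 < q u)
    (hqv : Real.exp (-(1 / 2)) * q u ≤ q v)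
    (henergy : ∑ i ∈ range (k + 1), ‖H (Ψ (i * h) v - Ψ (i * h) u)‖ ^ 2 ≤ ε ^ 2)
    (hpair : 0 ≤ ∑ i ∈ range (k + 1), ⟪H (Ψ (i * h) v - Ψ (i * h) u), Z i ω⟫) :
    Real.exp (-1) ≤ filterRatio Ψ H q h ε u Z k v ω := by
  rw [filterRatio_eq_of_jacDet_eq hJ hJv]
  have hprior : Real.exp (-(1 / 2)) ≤ q v / q u := (le_div_iff₀ hqu).mpr hqv
  have hlik : Real.exp (-(1 / 2)) ≤ Real.exp
      ((2 * ∑ i ∈ range (k + 1), ⟪H (Ψ (i * h) v - Ψ (i * h) u), Z i ω⟫ -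
        ∑ i ∈ range (k + 1), ‖H (Ψ (i * h) v - Ψ (i * h) u)‖ ^ 2) / (2 * ε ^ 2)) := by
    gcongr
    rw [le_div_iff₀ (by positivity)]
    linarith
  calc Real.exp (-1) = Real.exp (-(1 / 2)) * Real.exp (-(1 / 2)) := by
        rw [← Real.exp_add]; norm_num
    _ ≤ _ := mul_le_mul hprior hlik (Real.exp_pos _).le ((Real.exp_pos _).le.trans hprior)

lemma norm_sub_le_diam_highLikelihoodSet (hΨR : ∀ x, ‖x‖ ≤ R → ‖Ψ (k * h) x‖ ≤ R)
    (hu : ‖u‖ ≤ R) (hqu : q u ≠ 0) (hJ : jacDet Ψ (k * h) u ≠ 0)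
    (hv : v ∈ highLikelihoodSet Ψ H q h R ε u Z k ω) :
    ‖Ψ (k * h) v - Ψ (k * h) u‖ ≤
      Metric.diam (Ψ (k * h) '' highLikelihoodSet Ψ H q h R ε u Z k ω) := by
  have hbdd : Bornology.IsBounded (Ψ (k * h) '' highLikelihoodSet Ψ H q h R ε u Z k ω) := by
    refine (Metric.isBounded_closedBall (x := 0) (r := R)).subset ?_
    rintro _ ⟨w, hw, rfl⟩
    simpa using hΨR w hw.1
  have hu_mem : u ∈ highLikelihoodSet Ψ H q h R ε u Z k ω :=
    ⟨hu, by rw [filterRatio_self hqu hJ, Real.exp_le_one_iff]; norm_num⟩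
  rw [← dist_eq_norm]
  exact Metric.dist_le_diam_of_mem hbdd (mem_image_of_mem _ hv) (mem_image_of_mem _ hu_mem)

theorem ofReal_half_norm_sub_le_lintegral_diam [MeasurableSpace Ω] {μ : Measure Ω}
    [IsProbabilityMeasure μ] (hΨR : ∀ x, ‖x‖ ≤ R → ‖Ψ (k * h) x‖ ≤ R)
    (hZmeas : ∀ i, Measurable (Z i))
    (hZindep : iIndepFun (fun p : ℕ × Fin dO ↦ fun ω ↦ Z p.1 ω p.2) μ)
    (hZsymm : ∀ i j, IdentDistrib (fun ω ↦ Z i ω j) (fun ω ↦ -Z i ω j) μ μ)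
    (hε : 0 < ε) (hu : ‖u‖ ≤ R) (hv : ‖v‖ ≤ R) (hJ : jacDet Ψ (k * h) u ≠ 0)
    (hJv : jacDet Ψ (k * h) v = jacDet Ψ (k * h) u) (hqu : 0 < q u)
    (hqv : Real.exp (-(1 / 2)) * q u ≤ q v)
    (henergy : ∑ i ∈ range (k + 1), ‖H (Ψ (i * h) v - Ψ (i * h) u)‖ ^ 2 ≤ ε ^ 2) :
    ENNReal.ofReal (‖Ψ (k * h) v - Ψ (k * h) u‖ / 2) ≤
      ∫⁻ ω, ENNReal.ofReal
        (Metric.diam (Ψ (k * h) '' highLikelihoodSet Ψ H q h R ε u Z k ω)) ∂μ := by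
  set W : Ω → ℝ := fun ω ↦ ∑ i ∈ range (k + 1), ⟪H (Ψ (i * h) v - Ψ (i * h) u), Z i ω⟫
  have hW : Measurable W := by
    refine Finset.measurable_sum _ fun i _ ↦ ?_
    exact measurable_const.inner (hZmeas i)
  have hdiam : ∀ ω ∈ {ω | 0 ≤ W ω}, ‖Ψ (k * h) v - Ψ (k * h) u‖ ≤
      Metric.diam (Ψ (k * h) '' highLikelihoodSet Ψ H q h R ε u Z k ω) := fun ω hω ↦
    norm_sub_le_diam_highLikelihoodSet hΨR hu hqu.ne' hJ
      ⟨hv, exp_neg_one_le_filterRatio hε hJ hJv hqu hqv henergy hω⟩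
  calc ENNReal.ofReal (‖Ψ (k * h) v - Ψ (k * h) u‖ / 2)
      = ENNReal.ofReal ‖Ψ (k * h) v - Ψ (k * h) u‖ * (1 / 2) := by
        rw [ENNReal.ofReal_div_of_pos two_pos, ENNReal.ofReal_ofNat, ENNReal.div_eq_inv_mul,
          one_div, mul_comm]
    _ ≤ ENNReal.ofReal ‖Ψ (k * h) v - Ψ (k * h) u‖ * μ {ω | 0 ≤ W ω} := by
        gcongr
        exact half_le_measure_sum_inner_nonneg hZindep hZsymm _ _
    _ ≤ _ := ofReal_mul_measure_le_lintegral_ofReal (measurableSet_le measurable_const hW) hdiam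

end FilterRatio

theorem expected_diam_high_likelihood_filter_general {d dO : ℕ}
    (R : ℝ)
    (Ψ : ℝ → EuclideanSpace ℝ (Fin d) → EuclideanSpace ℝ (Fin d))
    (hΨ0 : ∀ x, ‖x‖ ≤ R → Ψ 0 x = x)
    (hΨR : ∀ x, ‖x‖ ≤ R → ∀ t : ℝ, 0 ≤ t → ‖Ψ t x‖ ≤ R)
    (h : ℝ) (hh : 0 < h)
    (H : EuclideanSpace ℝ (Fin d) →L[ℝ] EuclideanSpace ℝ (Fin dO)) (hH : 0 < ‖H‖)
    (Ω : Type*) [MeasurableSpace Ω] (μ : Measure Ω) [IsProbabilityMeasure μ]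
    -- a family of i.i.d. `N(0, ε² I)` noises, one for each noise level `ε > 0`
    (Z : ℝ → ℕ → Ω → EuclideanSpace ℝ (Fin dO))
    (hZmeas : ∀ ε : ℝ, 0 < ε → ∀ i, Measurable (Z ε i))
    (hZindep : ∀ ε : ℝ, 0 < ε → iIndepFun
      (fun p : ℕ × Fin dO => fun ω => Z ε p.1 ω p.2) μ)
    (hZlaw : ∀ ε : ℝ, 0 < ε → ∀ i : ℕ, ∀ j : Fin dO,
      Measure.map (fun ω => Z ε i ω j) μ = gaussianReal 0 (Real.toNNReal ε ^ 2))
    (q : EuclideanSpace ℝ (Fin d) → ℝ)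
    (u : EuclideanSpace ℝ (Fin d)) (hu : ‖u‖ ≤ R)
    (hqcont : ContinuousAt q u) (hqu : 0 < q u)
    -- differentiability and non-degeneracy of the Jacobians
    (hdet : ∀ k : ℕ, ∀ v : EuclideanSpace ℝ (Fin d), ‖v‖ ≤ R →
      jacDet Ψ (k * h) v ≠ 0)
    -- Assumption 6 (anti-leaf sets inside the level sets of the Jacobian determinant):
    (Ut : ℕ → Set (EuclideanSpace ℝ (Fin d)))
    (hUtsub : ∀ k : ℕ, Ut k ⊆
      {v : EuclideanSpace ℝ (Fin d) | ‖v‖ ≤ R ∧ jacDet Ψ (k * h) v = jacDet Ψ (k * h) u})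
    (dmaxk : ℕ → ℝ) (Ck : ℕ → ℝ)
    (hUtrange : ∀ k : ℕ,
      (fun v => ‖Ψ (k * h) v - Ψ (k * h) u‖) '' (Ut k) = Icc 0 (dmaxk k))
    (hCk : ∀ k : ℕ, ∀ v ∈ Ut k,
      ∑ i ∈ Finset.range (k + 1), ‖Ψ (i * h) v - Ψ (i * h) u‖ ^ 2 ≤
        Ck k * ‖Ψ (k * h) v - Ψ (k * h) u‖ ^ 2)
    (idx : ℕ → ℕ)
    (Ct dt : ℝ) (hdt : 0 < dt)
    (hCtb : ∀ j : ℕ, Ck (idx j) ≤ Ct) (hdtb : ∀ j : ℕ, dt ≤ dmaxk (idx j)) :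
    ∃ ε₀ : ℝ, 0 < ε₀ ∧ ∀ ε : ℝ, 0 < ε → ε ≤ ε₀ → ∀ j : ℕ,
      ENNReal.ofReal (ε / (2 * ‖H‖ * Real.sqrt Ct)) ≤
        ∫⁻ ω, ENNReal.ofReal (Metric.diam
          (Ψ (idx j * h) '' {v : EuclideanSpace ℝ (Fin d) | ‖v‖ ≤ R ∧
            Real.exp (-1) ≤ filterRatio Ψ H q h ε u (Z ε) (idx j) v ω})) ∂μ := by
  rcases le_or_gt Ct 0 with hCt | hCt
  · -- `Real.sqrt Ct = 0`, so the claimed bound is `ε / 0 = 0`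
    exact ⟨1, one_pos, fun ε _ _ j ↦ by simp [Real.sqrt_eq_zero'.mpr hCt]⟩
  have hq_near : Real.exp (-(1 / 2)) * q u < q u :=
    mul_lt_of_lt_one_left hqu (Real.exp_lt_one_iff.mpr (by norm_num))
  obtain ⟨δq, hδq, hq_ball⟩ :=
    Metric.nhds_basis_closedBall.eventually_iff.mp (hqcont.eventually (lt_mem_nhds hq_near))
  refine ⟨‖H‖ * min (dt * √Ct) δq, by positivity, fun ε hε hεle j ↦ ?_⟩
  have hεH : ε / ‖H‖ ≤ min (dt * √Ct) δq := (div_le_iff₀' hH).mpr hεle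
  have hr : ε / ‖H‖ / √Ct ≤ dmaxk (idx j) :=
    ((div_le_iff₀ (by positivity)).mpr (hεH.trans (min_le_left _ _))).trans (hdtb j)
  obtain ⟨v, hvR, hvJ, hvk, hsum⟩ :=
    exists_antiLeaf_point (hUtsub _) (hUtrange _) (hCk _) (hCtb j) (by positivity) hr
  rw [div_pow _ √Ct, Real.sq_sqrt hCt.le, mul_div_cancel₀ _ hCt.ne'] at hsum
  have hvu : ‖v - u‖ ≤ δq := by
    have h0 := (norm_sub_sq_le_sum_norm_sub_sq (hΨ0 v hvR) (hΨ0 u hu)).trans hsum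
    exact ((sq_le_sq₀ (norm_nonneg _) (by positivity)).mp h0).trans (hεH.trans (min_le_right _ _))
  have henergy : ∑ i ∈ range (idx j + 1), ‖H (Ψ (i * h) v - Ψ (i * h) u)‖ ^ 2 ≤ ε ^ 2 :=
    calc _ ≤ ‖H‖ ^ 2 * (ε / ‖H‖) ^ 2 := (H.sum_norm_apply_sq_le _ _).trans (by gcongr)
      _ = ε ^ 2 := by field_simp
  have hZsymm := fun i l ↦ identDistrib_neg_of_map_eq_gaussianReal
    (by have := hZmeas ε hε i; fun_prop) (hZlaw ε hε i l)
  have key := ofReal_half_norm_sub_le_lintegral_diam (fun x hx ↦ hΨR x hx _ (by positivity))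
    (hZmeas ε hε) (hZindep ε hε) hZsymm hε hu hvR (hdet _ u hu) hvJ hqu
    (hq_ball (by rwa [Metric.mem_closedBall, dist_eq_norm])).le henergy
  rw [hvk] at key
  exact (congrArg ENNReal.ofReal (by ring)).le.trans key

/-- lower bound on the expected Euclidean diameter of the set of
points of high likelihood for the filter, with Gaussian noise, under the
anti-leaf-set assumption (Assumption 6). -/
theorem expected_diam_high_likelihood_filter {d dO : ℕ}
    (A : EuclideanSpace ℝ (Fin d) →L[ℝ] EuclideanSpace ℝ (Fin d))
    (B : EuclideanSpace ℝ (Fin d) →L[ℝ] EuclideanSpace ℝ (Fin d) →L[ℝ] EuclideanSpace ℝ (Fin d))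
    (f : EuclideanSpace ℝ (Fin d))
    (R δ : ℝ) (hR : 0 < R) (hδ : 0 < δ)
    (htrap : ∀ x : EuclideanSpace ℝ (Fin d),
      ‖x‖ ∈ Icc R (R + δ) → (inner ℝ (f - A x - B x x) x : ℝ) ≤ 0)
    (Ψ : ℝ → EuclideanSpace ℝ (Fin d) → EuclideanSpace ℝ (Fin d))
    (hΨ0 : ∀ x, ‖x‖ ≤ R → Ψ 0 x = x)
    (hΨR : ∀ x, ‖x‖ ≤ R → ∀ t : ℝ, 0 ≤ t → ‖Ψ t x‖ ≤ R)
    (hΨode : ∀ x, ‖x‖ ≤ R → ∀ t : ℝ, 0 ≤ t →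
      HasDerivWithinAt (fun s => Ψ s x)
        (f - A (Ψ t x) - B (Ψ t x) (Ψ t x)) (Ici 0) t)
    (h : ℝ) (hh : 0 < h)
    (H : EuclideanSpace ℝ (Fin d) →L[ℝ] EuclideanSpace ℝ (Fin dO)) (hH : 0 < ‖H‖)
    (Ω : Type*) [MeasurableSpace Ω] (μ : Measure Ω) [IsProbabilityMeasure μ]
    -- a family of i.i.d. `N(0, ε² I)` noises, one for each noise level `ε > 0`
    (Z : ℝ → ℕ → Ω → EuclideanSpace ℝ (Fin dO))
    (hZmeas : ∀ ε : ℝ, 0 < ε → ∀ i, Measurable (Z ε i))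
    (hZindep : ∀ ε : ℝ, 0 < ε → iIndepFun
      (fun p : ℕ × Fin dO => fun ω => Z ε p.1 ω p.2) μ)
    (hZlaw : ∀ ε : ℝ, 0 < ε → ∀ i : ℕ, ∀ j : Fin dO,
      Measure.map (fun ω => Z ε i ω j) μ = gaussianReal 0 (Real.toNNReal ε ^ 2))
    (q : EuclideanSpace ℝ (Fin d) → ℝ) (hq : ∀ x, 0 ≤ q x)
    (hqsupp : ∀ x : EuclideanSpace ℝ (Fin d), ¬ ‖x‖ ≤ R → q x = 0)
    (u : EuclideanSpace ℝ (Fin d)) (hu : ‖u‖ ≤ R)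
    (hqcont : ContinuousAt q u) (hqu : 0 < q u)
    -- differentiability and non-degeneracy of the Jacobians
    (hdiff : ∀ k : ℕ, ∀ v : EuclideanSpace ℝ (Fin d), ‖v‖ ≤ R →
      DifferentiableAt ℝ (Ψ (k * h)) v)
    (hdet : ∀ k : ℕ, ∀ v : EuclideanSpace ℝ (Fin d), ‖v‖ ≤ R →
      jacDet Ψ (k * h) v ≠ 0)
    -- Assumption 6 (anti-leaf sets inside the level sets of the Jacobian determinant):
    (Ut : ℕ → Set (EuclideanSpace ℝ (Fin d)))
    (hUtsub : ∀ k : ℕ, Ut k ⊆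
      {v : EuclideanSpace ℝ (Fin d) | ‖v‖ ≤ R ∧ jacDet Ψ (k * h) v = jacDet Ψ (k * h) u})
    (dmaxk : ℕ → ℝ) (Ck : ℕ → ℝ)
    (hUtrange : ∀ k : ℕ,
      (fun v => ‖Ψ (k * h) v - Ψ (k * h) u‖) '' (Ut k) = Icc 0 (dmaxk k))
    (hCk : ∀ k : ℕ, ∀ v ∈ Ut k,
      ∑ i ∈ Finset.range (k + 1), ‖Ψ (i * h) v - Ψ (i * h) u‖ ^ 2 ≤
        Ck k * ‖Ψ (k * h) v - Ψ (k * h) u‖ ^ 2)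
    (idx : ℕ → ℕ) (hidx : StrictMono idx)
    (Ct dt : ℝ) (hdt : 0 < dt)
    (hCtb : ∀ j : ℕ, Ck (idx j) ≤ Ct) (hdtb : ∀ j : ℕ, dt ≤ dmaxk (idx j))
    (hqUt : ∀ v ∈ ⋃ k : ℕ, Ut k, 0 < q v) :
    ∃ ε₀ : ℝ, 0 < ε₀ ∧ ∀ ε : ℝ, 0 < ε → ε ≤ ε₀ → ∀ j : ℕ,
      ENNReal.ofReal (ε / (2 * ‖H‖ * Real.sqrt Ct)) ≤
        ∫⁻ ω, ENNReal.ofReal (Metric.diam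
          (Ψ (idx j * h) '' {v : EuclideanSpace ℝ (Fin d) | ‖v‖ ≤ R ∧
            Real.exp (-1) ≤ filterRatio Ψ H q h ε u (Z ε) (idx j) v ω})) ∂μ :=
  expected_diam_high_likelihood_filter_general R Ψ hΨ0 hΨR h hh H hH Ω μ Z hZmeas hZindep hZlaw q u
    hu hqcont hqu hdet Ut hUtsub dmaxk Ck hUtrange hCk idx Ct dt hdt hCtb hdtb

end
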